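/- arXiv:1110.4089 — 4 statements merged into one kernel-verified Lean document; each statement's English description precedes it below -/
import Mathlib

section
/- Let f be a bounded real-valued symbol on the unit circle that is not almost-everywhere equal to a constant, and let s = ess sup f. Then s is not an eigenvalue of T_n(f) for any n ≥ 1; i.e., every eigenvalue λ of T_n(f) satisfies λ < ess sup f. -/
open MeasureTheory Real

/-- The j-th Fourier coefficient of a function on the unit circle. -/
noncomputable def fourierCoef (f : ℝ → ℂ) (j : ℤ) : ℂ :=
  (1 / (2 * Real.pi)) * ∫ θ in (0:ℝ)..(2 * Real.pi),
    f θ * Complex.exp (-Complex.I * (j : ℂ) * (θ : ℂ))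

/-- The `n × n` Toeplitz matrix associated to a real-valued symbol. -/
noncomputable def toeplitzR (n : ℕ) (f : ℝ → ℝ) : Matrix (Fin n) (Fin n) ℂ :=
  Matrix.of fun j k => fourierCoef (fun θ => (f θ : ℂ)) ((j : ℤ) - (k : ℤ))

/-!
For `v : Fin n → ℂ` put `h(θ) = ∑ v_j e^{ijθ}`. Expanding the Fourier coefficients gives
`⟨v, T_n(f) v⟩ = (1/2π) ∫ f |h|²`, and for `f = 1` (where `T_n(1) = 1`) `⟨v, v⟩ = (1/2π) ∫ |h|²`.
So an eigenvalue is the mean of `f` against the weight `|h|²`: it is real and at most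
`s = ess sup f`. Equality would force `(s - f)|h|² = 0` a.e.; but `h` is a nonzero polynomial in
`e^{iθ}`, so it has finitely many zeros in a period, and `f` would be a.e. equal to `s`.
-/

open Filter ComplexConjugate
open scoped Matrix ComplexOrder

theorem integral_mul_lt_essSup_mul_integral {α : Type*} [MeasurableSpace α] {μ : Measure α}
    {f g : α → ℝ} (hf : IsBoundedUnder (· ≤ ·) (ae μ) f)
    (hnc : ¬ ∃ c : ℝ, f =ᵐ[μ] fun _ => c) (hg : Integrable g μ)
    (hfg : Integrable (fun x => f x * g x) μ) (hg_pos : ∀ᵐ x ∂μ, 0 < g x) :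
    ∫ x, f x * g x ∂μ < essSup f μ * ∫ x, g x ∂μ := by
  set s := essSup f μ
  have hgap : Integrable (fun x => (s - f x) * g x) μ := by
    simpa only [sub_mul, Pi.sub_def] using (hg.const_mul s).sub hfg
  have hgap_nonneg : 0 ≤ᵐ[μ] fun x => (s - f x) * g x := by
    filter_upwards [ae_le_essSup hf, hg_pos] with x hfx hgx
    exact mul_nonneg (sub_nonneg.2 hfx) hgx.le
  have hgap_pos : 0 < ∫ x, (s - f x) * g x ∂μ := by
    refine (integral_nonneg_of_ae hgap_nonneg).lt_of_ne' fun h0 => hnc ⟨s, ?_⟩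
    filter_upwards [(integral_eq_zero_iff_of_nonneg_ae hgap_nonneg hgap).1 h0, hg_pos]
      with x hx hgx
    exact (sub_eq_zero.1 ((mul_eq_zero.1 hx).resolve_right hgx.ne')).symm
  simp only [sub_mul] at hgap_pos
  rw [integral_sub (hg.const_mul s) hfg, integral_const_mul] at hgap_pos
  linarith

noncomputable def trigPoly {n : ℕ} (v : Fin n → ℂ) (θ : ℝ) : ℂ :=
  ∑ j : Fin n, v j * Complex.exp ((j : ℕ) * θ * Complex.I)

section TrigPoly

variable {n : ℕ} (v : Fin n → ℂ)

theorem continuous_trigPoly : Continuous (trigPoly v) := by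
  unfold trigPoly; fun_prop

open Classical in
theorem trigPoly_eq_eval (θ : ℝ) :
    trigPoly v θ = (Polynomial.ofFn n v).eval (Complex.exp (θ * Complex.I)) := by
  simp only [trigPoly, Polynomial.ofFn_eq_sum_monomial, Polynomial.eval_finsetSum,
    Polynomial.eval_monomial, ← Complex.exp_nat_mul, mul_assoc]

theorem finite_setOf_trigPoly_eq_zero (hv : v ≠ 0) :
    {θ ∈ Set.Ioc 0 (2 * π) | trigPoly v θ = 0}.Finite := by
  classical
  have hP : Polynomial.ofFn n v ≠ 0 := by
    simpa only [map_zero] using (Polynomial.injective_ofFn n).ne hv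
  have hexp : Set.InjOn (fun θ : ℝ => Complex.exp (θ * Complex.I)) (Set.Ioc 0 (2 * π)) :=
    Subtype.val_injective.comp_injOn (Circle.exp_injOn_Ioc (by simp))
  refine Set.Finite.of_finite_image ?_ (hexp.mono fun θ hθ => hθ.1)
  refine (Polynomial.ofFn n v).roots.toFinset.finite_toSet.subset ?_
  rintro _ ⟨θ, ⟨-, hθ⟩, rfl⟩
  rw [trigPoly_eq_eval] at hθ
  simpa [Polynomial.mem_roots hP] using hθ

theorem ae_trigPoly_ne_zero (hv : v ≠ 0) :
    ∀ᵐ θ ∂volume.restrict (Set.Ioc 0 (2 * π)), trigPoly v θ ≠ 0 := by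
  rw [ae_restrict_iff' measurableSet_Ioc, ae_iff]
  refine measure_mono_null (fun θ hθ => ?_) ((finite_setOf_trigPoly_eq_zero v hv).measure_zero _)
  simpa [and_assoc] using hθ

theorem ofReal_normSq_trigPoly (θ : ℝ) :
    (Complex.normSq (trigPoly v θ) : ℂ) = ∑ j, ∑ k, star (v j) * v k *
      Complex.exp (↑(-((j : ℤ) - (k : ℤ) : ℤ) * θ) * Complex.I) := by
  rw [Complex.normSq_eq_conj_mul_self, trigPoly, map_sum, Finset.sum_mul_sum]
  refine Finset.sum_congr rfl fun j _ => Finset.sum_congr rfl fun k _ => ?_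
  rw [map_mul, ← Complex.exp_conj, show star (v j) = conj (v j) from rfl, mul_mul_mul_comm,
    ← Complex.exp_add]
  congr 2
  simp only [map_mul, map_natCast, Complex.conj_ofReal, Complex.conj_I]
  push_cast
  ring

end TrigPoly

section Toeplitz

variable {n : ℕ}

theorem fourierCoef_eq_setIntegral (g : ℝ → ℂ) (m : ℤ) :
    fourierCoef g m = (1 / (2 * π)) *
      ∫ θ in Set.Ioc 0 (2 * π), g θ * Complex.exp (↑(-m * θ) * Complex.I) := by
  rw [fourierCoef, intervalIntegral.integral_of_le two_pi_pos.le]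
  congr 1
  refine setIntegral_congr_fun measurableSet_Ioc fun θ _ => ?_
  push_cast
  ring_nf

theorem fourierCoef_one (m : ℤ) : fourierCoef (fun _ => 1) m = if m = 0 then 1 else 0 := by
  split_ifs with hm
  · simp [fourierCoef, hm]
    field_simp
  · have hc : -Complex.I * m ≠ 0 := by simp [hm, Complex.I_ne_zero]
    simp only [fourierCoef, one_mul, integral_exp_mul_complex hc]
    rw [show -Complex.I * m * (2 * π : ℝ) = (-m : ℤ) * (2 * π * Complex.I) by push_cast; ring,
      Complex.exp_int_mul_two_pi_mul_I]
    simp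

theorem toeplitzR_one : toeplitzR n (fun _ => 1) = 1 := by
  ext j k
  simp only [toeplitzR, Matrix.of_apply, Complex.ofReal_one, fourierCoef_one, Matrix.one_apply,
    sub_eq_zero, Nat.cast_inj, Fin.val_inj]

theorem star_dotProduct_toeplitzR_mulVec {f : ℝ → ℝ}
    (hf : IntegrableOn f (Set.Ioc 0 (2 * π))) (v : Fin n → ℂ) :
    star v ⬝ᵥ (toeplitzR n f *ᵥ v) =
      ((1 / (2 * π) * ∫ θ in Set.Ioc 0 (2 * π), f θ * Complex.normSq (trigPoly v θ) : ℝ) : ℂ) := by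
  have hint : ∀ m : ℤ, IntegrableOn (fun θ => (f θ : ℂ) * Complex.exp (↑(-m * θ) * Complex.I))
      (Set.Ioc 0 (2 * π)) :=
    fun m => hf.ofReal.mul_bdd (by fun_prop)
      (ae_of_all _ fun θ => (Complex.norm_exp_ofReal_mul_I _).le)
  have hexpand : ∀ θ : ℝ, (f θ * Complex.normSq (trigPoly v θ) : ℂ) =
      ∑ j, ∑ k, star (v j) * v k *
        ((f θ : ℂ) * Complex.exp (↑(-((j : ℤ) - (k : ℤ) : ℤ) * θ) * Complex.I)) := fun θ => by
    simp only [ofReal_normSq_trigPoly, Finset.mul_sum]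
    exact Finset.sum_congr rfl fun j _ => Finset.sum_congr rfl fun k _ => by ring
  calc star v ⬝ᵥ (toeplitzR n f *ᵥ v)
      = ∑ j, ∑ k, star (v j) * v k * ((1 / (2 * π)) * ∫ θ in Set.Ioc 0 (2 * π),
          (f θ : ℂ) * Complex.exp (↑(-((j : ℤ) - (k : ℤ) : ℤ) * θ) * Complex.I)) := by
        simp only [dotProduct, Matrix.mulVec, Finset.mul_sum, toeplitzR, Matrix.of_apply,
          fourierCoef_eq_setIntegral]
        refine Finset.sum_congr rfl fun j _ => Finset.sum_congr rfl fun k _ => ?_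
        ac_rfl
    _ = (1 / (2 * π)) * ∫ θ in Set.Ioc 0 (2 * π), (f θ * Complex.normSq (trigPoly v θ) : ℂ) := by
        simp_rw [hexpand]
        rw [integral_finsetSum _ fun j _ => integrable_finsetSum _ fun k _ => (hint _).const_mul _,
          Finset.mul_sum]
        refine Finset.sum_congr rfl fun j _ => ?_
        rw [integral_finsetSum _ fun k _ => (hint _).const_mul _, Finset.mul_sum]
        refine Finset.sum_congr rfl fun k _ => ?_
        rw [integral_const_mul]
        ring
    _ = _ := by
        rw [Complex.ofReal_mul, ← integral_complex_ofReal]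
        push_cast
        rfl

theorem star_dotProduct_self_eq_integral_normSq_trigPoly (v : Fin n → ℂ) :
    star v ⬝ᵥ v =
      ((1 / (2 * π) * ∫ θ in Set.Ioc 0 (2 * π), Complex.normSq (trigPoly v θ) : ℝ) : ℂ) := by
  simpa only [toeplitzR_one, Matrix.one_mulVec, one_mul] using
    star_dotProduct_toeplitzR_mulVec (f := fun _ => 1) (integrable_const 1) v

theorem integral_normSq_trigPoly_pos {v : Fin n → ℂ} (hv : v ≠ 0) :
    0 < ∫ θ in Set.Ioc 0 (2 * π), Complex.normSq (trigPoly v θ) := by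
  refine (integral_nonneg fun θ => Complex.normSq_nonneg _).lt_of_ne' fun h0 => hv ?_
  rw [← dotProduct_star_self_eq_zero, star_dotProduct_self_eq_integral_normSq_trigPoly, h0]
  simp

theorem toeplitzR_eigenvalue_eq_integral_div {f : ℝ → ℝ}
    (hf : IntegrableOn f (Set.Ioc 0 (2 * π))) {lam : ℂ} {v : Fin n → ℂ} (hv : v ≠ 0)
    (heig : toeplitzR n f *ᵥ v = lam • v) :
    lam = ↑((∫ θ in Set.Ioc 0 (2 * π), f θ * Complex.normSq (trigPoly v θ)) /
      ∫ θ in Set.Ioc 0 (2 * π), Complex.normSq (trigPoly v θ)) := by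
  have hquad := star_dotProduct_toeplitzR_mulVec hf v
  rw [heig, dotProduct_smul, smul_eq_mul, star_dotProduct_self_eq_integral_normSq_trigPoly]
    at hquad
  have hc : 1 / (2 * π) ≠ 0 := by positivity
  have hA := mul_ne_zero hc (integral_normSq_trigPoly_pos hv).ne'
  rw [← mul_div_mul_left _ _ hc, Complex.ofReal_div, eq_div_iff (Complex.ofReal_ne_zero.2 hA),
    hquad]

end Toeplitz

theorem toeplitz_eigenvalue_lt_essSup_general (n : ℕ) (f : ℝ → ℝ)
    (hf : Measurable f) (hbd : ∃ C, ∀ θ, |f θ| ≤ C)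
    (hnc : ¬ ∃ c : ℝ, f =ᵐ[volume.restrict (Set.Ioc 0 (2 * Real.pi))] fun _ => c)
    (lam : ℂ) (v : Fin n → ℂ) (hv : v ≠ 0)
    (heig : (toeplitzR n f).mulVec v = lam • v) :
    lam.im = 0 ∧ lam.re < essSup f (volume.restrict (Set.Ioc 0 (2 * Real.pi))) := by
  obtain ⟨C, hC⟩ := hbd
  set μ := volume.restrict (Set.Ioc 0 (2 * π))
  set g : ℝ → ℝ := fun θ => Complex.normSq (trigPoly v θ)
  have hfμ : Integrable f μ := .of_bound hf.aestronglyMeasurable C (ae_of_all _ hC)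
  have hg : Integrable g μ :=
    (Complex.continuous_normSq.comp (continuous_trigPoly v)).integrableOn_Ioc
  have hg_pos : ∀ᵐ θ ∂μ, 0 < g θ :=
    (ae_trigPoly_ne_zero v hv).mono fun θ => Complex.normSq_pos.2
  have hlt : ∫ θ, f θ * g θ ∂μ < essSup f μ * ∫ θ, g θ ∂μ :=
    integral_mul_lt_essSup_mul_integral (isBoundedUnder_of ⟨C, fun θ => (abs_le.1 (hC θ)).2⟩)
      hnc hg (hg.bdd_mul hf.aestronglyMeasurable (ae_of_all _ hC)) hg_pos
  rw [toeplitzR_eigenvalue_eq_integral_div hfμ hv heig, Complex.ofReal_im, Complex.ofReal_re,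
    div_lt_iff₀ (integral_normSq_trigPoly_pos hv)]
  exact ⟨rfl, hlt⟩

/-- If the bounded real-valued symbol `f` is not a.e. constant, then
`s = ess sup f` is not an eigenvalue of `T_n(f)`: every eigenvalue is real
and is strictly less than `ess sup f`. -/
theorem toeplitz_eigenvalue_lt_essSup (n : ℕ) (hn : 1 ≤ n) (f : ℝ → ℝ)
    (hf : Measurable f) (hbd : ∃ C, ∀ θ, |f θ| ≤ C)
    (hnc : ¬ ∃ c : ℝ, f =ᵐ[volume.restrict (Set.Ioc 0 (2 * Real.pi))] fun _ => c)
    (lam : ℂ) (v : Fin n → ℂ) (hv : v ≠ 0)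
    (heig : (toeplitzR n f).mulVec v = lam • v) :
    lam.im = 0 ∧ lam.re < essSup f (volume.restrict (Set.Ioc 0 (2 * Real.pi))) :=
  toeplitz_eigenvalue_lt_essSup_general n f hf hbd hnc lam v hv heig
end

section
/- Under the hypotheses of the previous statement, the function Ψ(λ) = (θ_1(λ) - θ_2(λ))/2 + π is a strictly increasing continuous bijection from [L, M] onto [0, π], where L = min f, M = max f and θ_1(λ) < θ_2(λ) are the two solutions of f(e^{iθ}) = λ (with θ_1(L)=0, θ_2(L)=2π and θ_1(M)=θ_2(M)=θ̃). -/
open Real Set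

/-!
On `[L, M]` the branch `θ₁` is the inverse of `F` restricted to `[0, θ̃]`, hence strictly
increasing and mapping `[L, M]` onto `[0, θ̃]`; a monotone map of an interval onto an interval
has no jumps, so `θ₁` is continuous. Symmetrically `θ₂` is a strictly decreasing continuous map
onto `[θ̃, 2π]`. Hence `Ψ` is strictly increasing and continuous with `Ψ(L) = 0`, `Ψ(M) = π`,
and the intermediate value theorem makes it a bijection onto `[0, π]`.
-/

theorem MonotoneOn.continuousOn_Icc_of_surjOn {α β : Type*} [LinearOrder α] [TopologicalSpace α]
    [OrderTopology α] [LinearOrder β] [TopologicalSpace β] [OrderTopology β] [DenselyOrdered β]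
    {f : α → β} {a b : α} (hf : MonotoneOn f (Icc a b))
    (hs : SurjOn f (Icc a b) (Icc (f a) (f b))) : ContinuousOn f (Icc a b) := by
  rw [continuousOn_iff_continuous_domRestrict]
  have hmono : Monotone (hf.mapsTo_Icc.restrict f (Icc a b) (Icc (f a) (f b))) :=
    fun x y hxy => hf x.2 y.2 hxy
  have hsurj : Function.Surjective (hf.mapsTo_Icc.restrict f (Icc a b) (Icc (f a) (f b))) := by
    rintro ⟨y, hy⟩
    obtain ⟨x, hx, rfl⟩ := hs hy
    exact ⟨⟨x, hx⟩, rfl⟩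
  exact continuous_subtype_val.comp (hmono.continuous_of_surjective hsurj)

theorem StrictMonoOn.bijOn_Icc_of_continuousOn {α β : Type*} [ConditionallyCompleteLinearOrder α]
    [TopologicalSpace α] [OrderTopology α] [DenselyOrdered α] [LinearOrder β] [TopologicalSpace β]
    [OrderClosedTopology β] {f : α → β} {a b : α} (hab : a ≤ b) (hf : StrictMonoOn f (Icc a b))
    (hc : ContinuousOn f (Icc a b)) : BijOn f (Icc a b) (Icc (f a) (f b)) := by
  rw [← hc.image_Icc_of_monotoneOn hab hf.monotoneOn]
  exact hf.injOn.bijOn_image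

theorem MonotoneOn.strictMonoOn_of_leftInvOn {α β : Type*} [LinearOrder α] [LinearOrder β]
    {F : α → β} {t : β → α} {s : Set α} {S : Set β} (hF : MonotoneOn F s) (ht : MapsTo t S s)
    (hinv : LeftInvOn F t S) : StrictMonoOn t S := by
  intro x hx y hy hxy
  by_contra! hle
  have hyx := hF (ht hy) (ht hx) hle
  rw [hinv hx, hinv hy] at hyx
  exact hxy.not_ge hyx

section LevelSetBranch

variable {α β : Type*} [LinearOrder α] [LinearOrder β] {F : α → β} {t : β → α} {a b : α}

theorem mapsTo_Icc_and_leftInvOn_of_Ioo (hab : a ≤ b) (ha : t (F a) = a) (hb : t (F b) = b)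
    (ht : ∀ y ∈ Ioo (F a) (F b), t y ∈ Ioo a b ∧ F (t y) = y) :
    MapsTo t (Icc (F a) (F b)) (Icc a b) ∧ LeftInvOn F t (Icc (F a) (F b)) := by
  have key : ∀ y ∈ Icc (F a) (F b), t y ∈ Icc a b ∧ F (t y) = y := by
    rintro y ⟨hay, hyb⟩
    rcases hay.eq_or_lt with hy | hay
    · rw [← hy, ha]
      exact ⟨left_mem_Icc.2 hab, rfl⟩
    rcases hyb.eq_or_lt with hy | hyb
    · rw [hy, hb]
      exact ⟨right_mem_Icc.2 hab, rfl⟩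
    obtain ⟨hty, hFty⟩ := ht y ⟨hay, hyb⟩
    exact ⟨Ioo_subset_Icc_self hty, hFty⟩
  exact ⟨fun y hy => (key y hy).1, fun y hy => (key y hy).2⟩

variable [TopologicalSpace α] [OrderTopology α] [DenselyOrdered α] [TopologicalSpace β]
  [OrderTopology β]

theorem StrictMonoOn.strictMonoOn_continuousOn_of_Ioo (hF : StrictMonoOn F (Icc a b))
    (hab : a ≤ b) (ha : t (F a) = a) (hb : t (F b) = b)
    (ht : ∀ y ∈ Ioo (F a) (F b), t y ∈ Ioo a b ∧ F (t y) = y) :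
    StrictMonoOn t (Icc (F a) (F b)) ∧ ContinuousOn t (Icc (F a) (F b)) := by
  obtain ⟨hmaps, hinv⟩ := mapsTo_Icc_and_leftInvOn_of_Ioo hab ha hb ht
  have hmono := hF.monotoneOn.strictMonoOn_of_leftInvOn hmaps hinv
  have hsurj : SurjOn t (Icc (F a) (F b)) (Icc a b) :=
    (hF.injOn.rightInvOn_of_leftInvOn hinv hF.monotoneOn.mapsTo_Icc hmaps).surjOn
      hF.monotoneOn.mapsTo_Icc
  refine ⟨hmono, hmono.monotoneOn.continuousOn_Icc_of_surjOn ?_⟩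
  rwa [ha, hb]

theorem StrictAntiOn.strictAntiOn_continuousOn_of_Ioo (hF : StrictAntiOn F (Icc a b))
    (hab : a ≤ b) (ha : t (F a) = a) (hb : t (F b) = b)
    (ht : ∀ y ∈ Ioo (F b) (F a), t y ∈ Ioo a b ∧ F (t y) = y) :
    StrictAntiOn t (Icc (F b) (F a)) ∧ ContinuousOn t (Icc (F b) (F a)) := by
  have hdual := hF.dual_right.strictMonoOn_continuousOn_of_Ioo (t := t ∘ OrderDual.ofDual)
    hab ha hb fun y hy => ht y ⟨hy.2, hy.1⟩
  simp only [Function.comp_apply, Icc_toDual] at hdual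
  exact ⟨strictMonoOn_comp_ofDual_iff.1 hdual.1, hdual.2⟩

end LevelSetBranch

theorem psi_strictMono_bijOn_general (F : ℝ → ℝ) (θt : ℝ)
    (hθt : θt ∈ Set.Ioo 0 (2 * π))
    (hper : F 0 = F (2 * π))
    (hinc : StrictMonoOn F (Set.Icc 0 θt))
    (hdec : StrictAntiOn F (Set.Icc θt (2 * π)))
    (t₁ t₂ : ℝ → ℝ)
    (ht₁ : ∀ lam ∈ Set.Ioo (F 0) (F θt), t₁ lam ∈ Set.Ioo 0 θt ∧ F (t₁ lam) = lam)
    (ht₂ : ∀ lam ∈ Set.Ioo (F 0) (F θt), t₂ lam ∈ Set.Ioo θt (2 * π) ∧ F (t₂ lam) = lam)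
    (h1L : t₁ (F 0) = 0) (h2L : t₂ (F 0) = 2 * π)
    (h1M : t₁ (F θt) = θt) (h2M : t₂ (F θt) = θt) :
    StrictMonoOn (fun lam => (t₁ lam - t₂ lam) / 2 + π) (Set.Icc (F 0) (F θt)) ∧
    ContinuousOn (fun lam => (t₁ lam - t₂ lam) / 2 + π) (Set.Icc (F 0) (F θt)) ∧
    Set.BijOn (fun lam => (t₁ lam - t₂ lam) / 2 + π)
      (Set.Icc (F 0) (F θt)) (Set.Icc 0 π) := by
  obtain ⟨hθt0, hθt2⟩ := hθt
  have hLM : F 0 ≤ F θt :=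
    hinc.monotoneOn (left_mem_Icc.2 hθt0.le) (right_mem_Icc.2 hθt0.le) hθt0.le
  obtain ⟨ht₁mono, ht₁cont⟩ := hinc.strictMonoOn_continuousOn_of_Ioo hθt0.le h1L h1M ht₁
  obtain ⟨ht₂anti, ht₂cont⟩ :=
    hdec.strictAntiOn_continuousOn_of_Ioo hθt2.le h2M (hper ▸ h2L) (hper ▸ ht₂)
  rw [← hper] at ht₂anti ht₂cont
  have hmono : StrictMonoOn (fun lam => (t₁ lam - t₂ lam) / 2 + π) (Icc (F 0) (F θt)) :=
    fun x hx y hy hxy => by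
      have h₁ := ht₁mono hx hy hxy
      have h₂ := ht₂anti hx hy hxy
      dsimp only
      linarith
  have hcont : ContinuousOn (fun lam => (t₁ lam - t₂ lam) / 2 + π) (Icc (F 0) (F θt)) :=
    ((ht₁cont.sub ht₂cont).div_const 2).add continuousOn_const
  refine ⟨hmono, hcont, ?_⟩
  have hL : (t₁ (F 0) - t₂ (F 0)) / 2 + π = 0 := by rw [h1L, h2L]; ring
  have hM : (t₁ (F θt) - t₂ (F θt)) / 2 + π = π := by rw [h1M, h2M]; ring
  simpa only [hL, hM] using hmono.bijOn_Icc_of_continuousOn hLM hcont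

/-- With `F` as in the previous statement, `L = F 0 = min F`, `M = F θ̃ = max F`,
and `θ₁(λ) ≤ θ₂(λ)` the level-set endpoints (extended continuously with
`θ₁(L) = 0`, `θ₂(L) = 2π`, `θ₁(M) = θ₂(M) = θ̃`), the function
`Ψ(λ) = (θ₁(λ) - θ₂(λ))/2 + π` is a strictly increasing continuous bijection
from `[L, M]` onto `[0, π]`. -/
theorem psi_strictMono_bijOn (F : ℝ → ℝ) (θt : ℝ)
    (hθt : θt ∈ Set.Ioo 0 (2 * π))
    (hcont : ContinuousOn F (Set.Icc 0 (2 * π)))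
    (hper : F 0 = F (2 * π))
    (hpos : ∀ θ, 0 < F θ)
    (hinc : StrictMonoOn F (Set.Icc 0 θt))
    (hdec : StrictAntiOn F (Set.Icc θt (2 * π)))
    (t₁ t₂ : ℝ → ℝ)
    (ht₁ : ∀ lam ∈ Set.Ioo (F 0) (F θt), t₁ lam ∈ Set.Ioo 0 θt ∧ F (t₁ lam) = lam)
    (ht₂ : ∀ lam ∈ Set.Ioo (F 0) (F θt), t₂ lam ∈ Set.Ioo θt (2 * π) ∧ F (t₂ lam) = lam)
    (h1L : t₁ (F 0) = 0) (h2L : t₂ (F 0) = 2 * π)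
    (h1M : t₁ (F θt) = θt) (h2M : t₂ (F θt) = θt) :
    StrictMonoOn (fun lam => (t₁ lam - t₂ lam) / 2 + π) (Set.Icc (F 0) (F θt)) ∧
    ContinuousOn (fun lam => (t₁ lam - t₂ lam) / 2 + π) (Set.Icc (F 0) (F θt)) ∧
    Set.BijOn (fun lam => (t₁ lam - t₂ lam) / 2 + π)
      (Set.Icc (F 0) (F θt)) (Set.Icc 0 π) :=
  psi_strictMono_bijOn_general F θt hθt hper hinc hdec t₁ t₂ ht₁ ht₂ h1L h2L h1M h2M
end

section
/- Let G : [L,M] → ℝ be differentiable on (L,M) with G'(λ) = ((n+1)a(λ) + b(λ)) / √((λ-L)(M-λ)) where a, b are continuous on [L,M], a ≥ a_min > 0, and (n+1)a_min + b_min > 0 (b_min = min b). If λ < μ in (L,M) satisfy G(μ) - G(λ) = π + r with |r| ≤ 1, and λ, μ ∈ [λ_ε, μ_ε] ⊂ (L,M), then c_1/n ≤ μ - λ ≤ c_2/n for constants 0 < c_1 < c_2 depending only on a_min, a_max, b_min, b_max, λ_ε, μ_ε (for n sufficiently large). -/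
open Real Set

set_option maxHeartbeats 1000000 in
/-- Bulk eigenvalue spacing: if `G' = ((n+1)a + b)/√((λ-L)(M-λ))` with
`0 < a_min ≤ a ≤ a_max`, `b_min ≤ b ≤ b_max`, and `λ < μ` in a fixed compact
subinterval `[λ_ε, μ_ε] ⊂ (L,M)` satisfy `G(μ) - G(λ) = π + r`, `|r| ≤ 1`, then
`c₁/n ≤ μ - λ ≤ c₂/n` for constants `0 < c₁ < c₂` depending only on the data
(for `n` sufficiently large). -/
theorem bulk_spacing (L M lamε muε amin amax bmin bmax : ℝ)
    (hLlam : L < lamε) (hlammu : lamε < muε) (hmuM : muε < M)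
    (hamin : 0 < amin) (ha : amin ≤ amax) (hb : bmin ≤ bmax) :
    ∃ c₁ c₂ : ℝ, ∃ N : ℕ, 0 < c₁ ∧ c₁ < c₂ ∧
      ∀ n : ℕ, N ≤ n → ∀ G a b : ℝ → ℝ,
        (∀ x ∈ Set.Icc L M, amin ≤ a x ∧ a x ≤ amax ∧ bmin ≤ b x ∧ b x ≤ bmax) →
        (∀ x ∈ Set.Ioo L M,
          HasDerivAt G (((n + 1) * a x + b x) / Real.sqrt ((x - L) * (M - x))) x) →
        ∀ lam mu r : ℝ, lam ∈ Set.Icc lamε muε → mu ∈ Set.Icc lamε muε →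
          lam < mu → G mu - G lam = π + r → |r| ≤ 1 →
          c₁ / n ≤ mu - lam ∧ mu - lam ≤ c₂ / n := by
  have hpi : (1:ℝ) < π := by linarith [Real.pi_gt_three]
  have hamax : 0 < amax := lt_of_lt_of_le hamin ha
  set d₁ := (lamε - L) * (M - muε) with hd₁def
  set d₂ := (muε - L) * (M - lamε) with hd₂def
  have hd₁pos : 0 < d₁ := mul_pos (by linarith) (by linarith)
  have hd₂pos : 0 < d₂ := mul_pos (by linarith) (by linarith)
  have hd₁₂ : Real.sqrt d₁ ≤ Real.sqrt d₂ := by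
    apply Real.sqrt_le_sqrt
    apply mul_le_mul (by linarith) (by linarith) (by linarith) (by linarith)
  have hden : 0 < 2 * amax + |bmax| := by positivity
  have hs₁pos : 0 < Real.sqrt d₁ := Real.sqrt_pos.mpr hd₁pos
  have hs₂pos : 0 < Real.sqrt d₂ := Real.sqrt_pos.mpr hd₂pos
  refine ⟨(π - 1) * Real.sqrt d₁ / (2 * amax + |bmax|),
    2 * (π + 1) * Real.sqrt d₂ / amin, max 1 ⌈2 * |bmin| / amin⌉₊, ?_, ?_, ?_⟩
  · exact div_pos (mul_pos (by linarith) hs₁pos) hden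
  · calc (π - 1) * Real.sqrt d₁ / (2 * amax + |bmax|)
        ≤ (π - 1) * Real.sqrt d₂ / (2 * amax + |bmax|) := by gcongr
      _ < 2 * (π + 1) * Real.sqrt d₂ / (2 * amax + |bmax|) := by
          rw [div_lt_div_iff₀ hden hden]
          nlinarith [mul_pos (mul_pos (show (0:ℝ) < π + 3 by linarith) hs₂pos) hden]
      _ ≤ 2 * (π + 1) * Real.sqrt d₂ / amin := by
          apply div_le_div_of_nonneg_left (by positivity) hamin
          linarith [abs_nonneg bmax]
  intro n hn G a b hab hG lam mu r hlam hmu hlm heq hr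
  have hn1 : 1 ≤ n := le_trans (le_max_left _ _) hn
  have hn1r : (1:ℝ) ≤ (n:ℝ) := by exact_mod_cast hn1
  have hnpos : (0:ℝ) < (n:ℝ) := by linarith
  have hn2 : 2 * |bmin| / amin ≤ (n:ℝ) := by
    have h := le_trans (le_max_right 1 ⌈2 * |bmin| / amin⌉₊) hn
    exact Nat.ceil_le.mp h
  have hbn : 2 * |bmin| ≤ amin * (n:ℝ) := by
    rw [div_le_iff₀ hamin] at hn2; linarith
  -- G is continuous on [lam, mu]
  have hsub : ∀ x ∈ Set.Icc lam mu, x ∈ Set.Ioo L M := by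
    intro x hx
    exact ⟨by linarith [hlam.1, hx.1], by linarith [hmu.2, hx.2]⟩
  have hcont : ContinuousOn G (Set.Icc lam mu) := fun x hx =>
    ((hG x (hsub x hx)).continuousAt).continuousWithinAt
  obtain ⟨ξ, hξ, hslope⟩ := exists_hasDerivAt_eq_slope G
    (fun x => (((n:ℝ) + 1) * a x + b x) / Real.sqrt ((x - L) * (M - x))) hlm hcont
    (fun x hx => hG x (hsub x ⟨hx.1.le, hx.2.le⟩))
  have hξ1 : lamε ≤ ξ := le_trans hlam.1 hξ.1.le
  have hξ2 : ξ ≤ muε := le_trans hξ.2.le hmu.2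
  set S := Real.sqrt ((ξ - L) * (M - ξ)) with hSdef
  set Q := ((n:ℝ) + 1) * a ξ + b ξ with hQdef
  have hSpos : 0 < S := Real.sqrt_pos.mpr (mul_pos (by linarith) (by linarith))
  have hS1 : Real.sqrt d₁ ≤ S := by
    apply Real.sqrt_le_sqrt
    apply mul_le_mul (by linarith) (by linarith) (by linarith) (by linarith)
  have hS2 : S ≤ Real.sqrt d₂ := by
    apply Real.sqrt_le_sqrt
    apply mul_le_mul (by linarith) (by linarith) (by linarith) (by linarith)
  obtain ⟨haξ1, haξ2, hbξ1, hbξ2⟩ := hab ξ ⟨by linarith, by linarith⟩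
  have h1 : ((n:ℝ) + 1) * amin ≤ ((n:ℝ) + 1) * a ξ :=
    mul_le_mul_of_nonneg_left haξ1 (by positivity)
  have h2 : ((n:ℝ) + 1) * a ξ ≤ ((n:ℝ) + 1) * amax :=
    mul_le_mul_of_nonneg_left haξ2 (by positivity)
  have hQlow : amin * (n:ℝ) / 2 ≤ Q := by
    rw [hQdef]
    have := neg_abs_le bmin
    nlinarith
  have hQpos : 0 < Q := lt_of_lt_of_le (by positivity) hQlow
  have hQhigh : Q ≤ (2 * amax + |bmax|) * (n:ℝ) := by
    rw [hQdef]
    have e1 : ((n:ℝ) + 1) * amax ≤ 2 * amax * (n:ℝ) := by nlinarith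
    have e2 : bmax ≤ |bmax| * (n:ℝ) :=
      le_trans (le_abs_self bmax) (le_mul_of_one_le_right (abs_nonneg _) hn1r)
    nlinarith [h2]
  have hD : 0 < mu - lam := sub_pos.mpr hlm
  have hP1 : π - 1 ≤ π + r := by linarith [(abs_le.mp hr).1]
  have hP2 : π + r ≤ π + 1 := by linarith [(abs_le.mp hr).2]
  have hPpos : 0 < π + r := by linarith
  rw [heq] at hslope
  have key : Q * (mu - lam) = (π + r) * S :=
    (div_eq_div_iff hSpos.ne' hD.ne').mp hslope
  have hDval : mu - lam = (π + r) * S / Q := by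
    rw [eq_div_iff hQpos.ne']
    linear_combination key
  constructor
  · calc (π - 1) * Real.sqrt d₁ / (2 * amax + |bmax|) / (n:ℝ)
        = (π - 1) * Real.sqrt d₁ / ((2 * amax + |bmax|) * (n:ℝ)) := by
          rw [div_div]
      _ ≤ (π + r) * S / Q := by
          apply div_le_div₀ (by positivity)
            (mul_le_mul hP1 hS1 hs₁pos.le hPpos.le) hQpos hQhigh
      _ = mu - lam := hDval.symm
  · calc mu - lam = (π + r) * S / Q := hDval
      _ ≤ (π + 1) * Real.sqrt d₂ / (amin * (n:ℝ) / 2) := by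
          apply div_le_div₀ (by positivity)
            (mul_le_mul hP2 hS2 hSpos.le (by linarith)) (by positivity) hQlow
      _ = 2 * (π + 1) * Real.sqrt d₂ / amin / (n:ℝ) := by
          field_simp
end

section
/- Let θ_2 - θ_1 = 2πp/q with p, q coprime positive integers, p < q. Suppose for every λ in an interval I one has E_n(λ) = cos((n/2)(θ_2-θ_1) + H_n(λ)) + e_n(λ) with |e_n(λ)| ≤ C/n, and suppose λ ∈ I satisfies |E_n(λ)| ≤ C'/n. Then |E_{n+1}(λ)| ≥ sin(πp/q) - C''/n for a constant C'' depending only on C, C'; in particular for n large enough E_{n+1} has no zeros at points where |E_n| ≤ C'/n. -/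
open Real

private lemma cos_lip (x y : ℝ) : |Real.cos x - Real.cos y| ≤ |x - y| := by
  rw [Real.cos_sub_cos]
  have h1 : |Real.sin ((x + y) / 2)| ≤ 1 := Real.abs_sin_le_one _
  have h2 : |Real.sin ((x - y) / 2)| ≤ |(x - y) / 2| := Real.abs_sin_le_abs
  have h3 : |(x - y) / 2| = |x - y| / 2 := by rw [abs_div]; norm_num
  rw [abs_mul, abs_mul]
  have : |(-2 : ℝ)| = 2 := by norm_num
  rw [this]
  nlinarith [abs_nonneg (Real.sin ((x + y) / 2)), abs_nonneg (Real.sin ((x - y) / 2)),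
    abs_nonneg (x - y)]

private lemma aux_bound (c1 c2 s E sx : ℝ) (hc1 : 0 < c1) (hc2 : 0 < c2)
    (hs0 : 0 < s) (hs1 : s ≤ 1) (hsx : |sx| ≤ 1)
    (hsin : 1 - (c2 + 2 * c1) ≤ |sx| ∨ 1 < c2 + 2 * c1)
    (hE : s * |sx| - (c2 + 2 * c1) - c1 ≤ |E|) :
    s - (5 * c1 + 2 * c2) ≤ |E| := by
  rcases hsin with h | h
  · have hmul : s * (1 - (c2 + 2 * c1)) ≤ s * |sx| :=
      mul_le_mul_of_nonneg_left h hs0.le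
    nlinarith
  · nlinarith [abs_nonneg E]

private lemma sin_abs_lower (t c : ℝ) (hc : 0 ≤ c) (hc1 : c ≤ 1)
    (hcos : |Real.cos t| ≤ c) : 1 - c ≤ |Real.sin t| := by
  nlinarith [Real.sin_sq_add_cos_sq t, sq_abs (Real.sin t), sq_abs (Real.cos t),
    abs_nonneg (Real.sin t), abs_nonneg (Real.cos t)]

set_option maxHeartbeats 1000000 in
/-- Near-periodicity mechanism: if `θ₂ - θ₁ = 2πp/q` (p, q coprime, 0 < p < q),
`E_n(λ) = cos((n/2)(θ₂-θ₁) + H_n(λ)) + e_n(λ)` with `|e_n| ≤ C/n`,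
`E_{n+1}(λ) = cos((n/2)(θ₂-θ₁) + H_{n+1}(λ) + πp/q) + e_{n+1}(λ)` with
`|H_{n+1} - H_n| ≤ C/n`, `|e_{n+1}| ≤ C/n` on `I`, and `|E_n(λ)| ≤ C'/n`, then
`|E_{n+1}(λ)| ≥ sin(πp/q) - C''/n` for a constant `C''` depending only on
`C, C'`; in particular for `n` large enough `E_{n+1}(λ) ≠ 0`. -/
theorem no_zero_of_shifted_cosine (C C' : ℝ) (hC : 0 < C) (hC' : 0 < C') :
    ∃ C'' : ℝ, 0 < C'' ∧
      ∀ (p q : ℕ), Nat.Coprime p q → 0 < p → p < q →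
      ∀ (n : ℕ), 0 < n →
      ∀ (θ₁ θ₂ : ℝ) (Hn Hn1 en en1 En En1 : ℝ → ℝ) (I : Set ℝ) (lam : ℝ),
        lam ∈ I →
        θ₂ - θ₁ = 2 * π * p / q →
        (∀ x ∈ I, En x = Real.cos (((n : ℝ) / 2) * (θ₂ - θ₁) + Hn x) + en x) →
        (∀ x ∈ I, |en x| ≤ C / n) →
        (∀ x ∈ I, En1 x =
          Real.cos (((n : ℝ) / 2) * (θ₂ - θ₁) + Hn1 x + π * p / q) + en1 x) →
        (∀ x ∈ I, |Hn1 x - Hn x| ≤ C / n) →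
        (∀ x ∈ I, |en1 x| ≤ C / n) →
        |En lam| ≤ C' / n →
        Real.sin (π * p / q) - C'' / n ≤ |En1 lam| ∧
          (C'' / n < Real.sin (π * p / q) → En1 lam ≠ 0) := by
  refine ⟨5 * C + 2 * C', by linarith, ?_⟩
  intro p q hcop hp hpq n hn θ₁ θ₂ Hn Hn1 en en1 En En1 I lam hlam hθ hEn hen hEn1 hH hen1 hEnb
  have hnR : (0 : ℝ) < (n : ℝ) := by exact_mod_cast hn
  set N : ℝ := (n : ℝ) with hN
  set α : ℝ := π * p / q with hα
  set s : ℝ := Real.sin α with hs_def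
  set A : ℝ := ((n : ℝ) / 2) * (θ₂ - θ₁) + Hn lam with hA
  set x : ℝ := ((n : ℝ) / 2) * (θ₂ - θ₁) + Hn1 lam with hx
  have hqR : (0 : ℝ) < (q : ℝ) := by exact_mod_cast hp.trans hpq
  have hα0 : 0 < α := by
    have hpR : (0 : ℝ) < (p : ℝ) := by exact_mod_cast hp
    have := Real.pi_pos
    positivity
  have hαπ : α < π := by
    have hpqR : (p : ℝ) < (q : ℝ) := by exact_mod_cast hpq
    rw [hα, div_lt_iff₀ hqR]
    have := Real.pi_pos
    nlinarith
  have hs0 : 0 < s := Real.sin_pos_of_pos_of_lt_pi hα0 hαπ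
  have hs1 : s ≤ 1 := Real.sin_le_one α
  -- bound |cos A|
  have hcosA : |Real.cos A| ≤ C' / N + C / N := by
    have h1 := hEn lam hlam
    have h2 := hen lam hlam
    have hAe : Real.cos A = En lam - en lam := by rw [h1]; ring
    rw [hAe]
    calc |En lam - en lam| ≤ |En lam| + |en lam| := abs_sub _ _
      _ ≤ C' / N + C / N := add_le_add hEnb h2
  -- cos is 1-Lipschitz
  have hlip : |Real.cos x - Real.cos A| ≤ C / N := by
    have h := cos_lip x A
    have hxa : x - A = Hn1 lam - Hn lam := by rw [hx, hA]; ring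
    calc |Real.cos x - Real.cos A| ≤ |x - A| := h
      _ = |Hn1 lam - Hn lam| := by rw [hxa]
      _ ≤ C / N := hH lam hlam
  have hcosx : |Real.cos x| ≤ C' / N + 2 * (C / N) := by
    calc |Real.cos x| ≤ |Real.cos x - Real.cos A| + |Real.cos A| := by
          have := abs_add_le (Real.cos x - Real.cos A) (Real.cos A); simpa using this
      _ ≤ C / N + (C' / N + C / N) := add_le_add hlip hcosA
      _ = C' / N + 2 * (C / N) := by ring
  have hCN : 0 < C / N := div_pos hC hnR
  have hC'N : 0 < C' / N := div_pos hC' hnR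
  -- expression for En1
  have hE1 : En1 lam = Real.cos x * Real.cos α - Real.sin x * s + en1 lam := by
    have h1 := hEn1 lam hlam
    rw [h1]
    have harg : ((n : ℝ) / 2) * (θ₂ - θ₁) + Hn1 lam + π * p / q = x + α := by
      rw [hx, hα]
    rw [harg, Real.cos_add, hs_def]
  have hen1b : |en1 lam| ≤ C / N := hen1 lam hlam
  -- lower bound on |En1|
  have hlow : s * |Real.sin x| - (C' / N + 2 * (C / N)) - C / N ≤ |En1 lam| := by
    have h1 : |(-(Real.sin x * s))| - |En1 lam| ≤ |(-(Real.sin x * s)) - En1 lam| :=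
      abs_sub_abs_le_abs_sub _ _
    have h2 : (-(Real.sin x * s)) - En1 lam = -(Real.cos x * Real.cos α) - en1 lam := by
      rw [hE1]; ring
    rw [h2] at h1
    have h3 : |(-(Real.cos x * Real.cos α)) - en1 lam| ≤ |Real.cos x| * |Real.cos α| + |en1 lam| := by
      calc |(-(Real.cos x * Real.cos α)) - en1 lam|
          ≤ |(-(Real.cos x * Real.cos α))| + |en1 lam| := abs_sub _ _
        _ = |Real.cos x| * |Real.cos α| + |en1 lam| := by rw [abs_neg, abs_mul]
    have h4 : |Real.cos x| * |Real.cos α| ≤ |Real.cos x| := by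
      have hc := Real.abs_cos_le_one α
      nlinarith [abs_nonneg (Real.cos x)]
    have h5 : |(-(Real.sin x * s))| = s * |Real.sin x| := by
      rw [abs_neg, abs_mul, abs_of_pos hs0]; ring
    rw [h5] at h1
    linarith
  -- |sin x| lower bound or trivial case
  have hsin : 1 - (C' / N + 2 * (C / N)) ≤ |Real.sin x| ∨ 1 < C' / N + 2 * (C / N) := by
    by_cases hcase : C' / N + 2 * (C / N) ≤ 1
    · exact Or.inl (sin_abs_lower x _ (by positivity) hcase hcosx)
    · right; linarith
  have hmain : s - (5 * (C / N) + 2 * (C' / N)) ≤ |En1 lam| :=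
    aux_bound (C / N) (C' / N) s (En1 lam) (Real.sin x) hCN hC'N hs0 hs1
      (Real.abs_sin_le_one x) hsin hlow
  have hsplit : (5 * C + 2 * C') / N = 5 * (C / N) + 2 * (C' / N) := by ring
  refine ⟨by rw [hsplit]; exact hmain, ?_⟩
  intro hlt h0
  rw [hsplit] at hlt
  rw [h0, abs_zero] at hmain
  linarith
end
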